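/- Fix α, β ∈ (0,1), positive reals a, b, T, θ ∈ (π/2, π), and a nonnegative integer m. There exists a constant C > 0 such that for all t ∈ (0, T]: 2·∫_{1/t}^∞ ρ^{m−1} (ρ + a ρ^{1+α}) · min{1, ρ^{−β}/b} · e^{t ρ cos θ} dρ + t^{−m} · ((1/t) + a (1/t)^{1+α}) · min{1, t^{β}/b} · ∫_{−θ}^{θ} e^{cos ψ} dψ ≤ C · t^{−m−1−α+β}. -/

import Mathlib

/-!
On the rays `min{1, ρ^{-β}/b} ≤ ρ^{-β}/b` turns the integrand into
`(ρ^{s-1} + a ρ^{s+α-1}) e^{-ρ t |cos θ|} / b` with `s = m + 1 - β`, whose integral over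
`(0, ∞)` is a sum of Gamma integrals `Γ(σ) (t |cos θ|)^{-σ}`; the same bound evaluated at
`ρ = 1/t` controls the arc. Both pieces are thus `O(t^{-s} + a t^{-s-α})`, and
`t^{-s} ≤ T^α t^{-s-α}` for `t ≤ T`.
-/

open MeasureTheory intervalIntegral Real Set

lemma integrableOn_rpow_sub_one_mul_exp_neg_mul {s r : ℝ} (hs : 0 < s) (hr : 0 < r) :
    IntegrableOn (fun x : ℝ => x ^ (s - 1) * exp (-(r * x))) (Ioi 0) := by
  simpa [neg_mul] using integrableOn_rpow_mul_exp_neg_mul_rpow (by linarith) one_pos hr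

lemma setIntegral_Ioi_rpow_sub_one_mul_exp_neg_mul_le {s r u : ℝ} (hs : 0 < s) (hr : 0 < r)
    (hu : 0 ≤ u) :
    ∫ x in Ioi u, x ^ (s - 1) * exp (-(r * x)) ≤ Gamma s * r ^ (-s) := by
  rw [rpow_neg hr.le, ← inv_rpow hr.le, mul_comm, ← one_div,
    ← integral_rpow_mul_exp_neg_mul_Ioi hs hr]
  refine setIntegral_mono_set (integrableOn_rpow_sub_one_mul_exp_neg_mul hs hr) ?_
    (Ioi_subset_Ioi hu).eventuallyLE
  filter_upwards [self_mem_ae_restrict measurableSet_Ioi] with x (hx : 0 < x)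
  positivity

lemma rpow_sub_one_mul_add_mul_min_le {p α β a b ρ : ℝ} (hρ : 0 < ρ) (ha : 0 ≤ a) :
    ρ ^ (p - 1) * (ρ + a * ρ ^ (1 + α)) * min 1 (ρ ^ (-β) / b) ≤
      (ρ ^ (p - β) + a * ρ ^ (p - β + α)) / b := by
  calc _ ≤ ρ ^ (p - 1) * (ρ + a * ρ ^ (1 + α)) * (ρ ^ (-β) / b) := by
        gcongr; exact min_le_right _ _
    _ = _ := by
      have e₁ : ρ ^ (p - 1) * ρ * ρ ^ (-β) = ρ ^ (p - β) := by
        rw [← rpow_add_one hρ.ne', ← rpow_add hρ]; ring_nf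
      have e₂ : ρ ^ (p - 1) * ρ ^ (1 + α) * ρ ^ (-β) = ρ ^ (p - β + α) := by
        rw [← rpow_add hρ, ← rpow_add hρ]; ring_nf
      rw [← e₁, ← e₂]
      ring

lemma rpow_neg_mul_add_mul_min_le {p α β a b t : ℝ} (ht : 0 < t) (ha : 0 ≤ a) :
    t ^ (-p) * (1 / t + a * (1 / t) ^ (1 + α)) * min 1 (t ^ β / b) ≤
      (t ^ (-(p - β + 1)) + a * t ^ (-(p - β + 1 + α))) / b := by
  calc _ ≤ t ^ (-p) * (1 / t + a * (1 / t) ^ (1 + α)) * (t ^ β / b) := by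
        gcongr; exact min_le_right _ _
    _ = _ := by
      rw [one_div, inv_rpow ht.le, ← rpow_neg ht.le, ← rpow_neg_one,
        show -(p - β + 1 + α) = -p + -(1 + α) + β by ring, show -(p - β + 1) = -p + -1 + β by ring,
        rpow_add ht, rpow_add ht, rpow_add ht, rpow_add ht]
      ring

lemma rpow_neg_le_mul_rpow_neg {s α t T : ℝ} (ht : 0 < t) (htT : t ≤ T) (hα : 0 ≤ α) :
    t ^ (-s) ≤ T ^ α * t ^ (-(s + α)) :=
  calc t ^ (-s) = t ^ α * t ^ (-(s + α)) := by rw [← rpow_add ht]; ring_nf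
    _ ≤ T ^ α * t ^ (-(s + α)) := by gcongr

lemma setIntegral_Ioi_rpow_mul_add_mul_min_mul_exp_le {p α β a b κ t u : ℝ} (hpβ : β < p + 1)
    (hα : 0 ≤ α) (ha : 0 ≤ a) (hb : 0 < b) (hκ : κ < 0) (ht : 0 < t) (hu : 0 ≤ u) :
    ∫ ρ in Ioi u, ρ ^ (p - 1) * (ρ + a * ρ ^ (1 + α)) * min 1 (ρ ^ (-β) / b) * exp (t * ρ * κ) ≤
      (Gamma (p - β + 1) * (-κ) ^ (-(p - β + 1)) * t ^ (-(p - β + 1)) +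
        a * (Gamma (p - β + 1 + α) * (-κ) ^ (-(p - β + 1 + α)) * t ^ (-(p - β + 1 + α)))) / b := by
  set r := -κ * t
  have hr : 0 < r := mul_pos (neg_pos.2 hκ) ht
  have hs₁ : 0 < p - β + 1 := by linarith
  have hs₂ : 0 < p - β + 1 + α := by linarith
  set g : ℝ → ℝ := fun ρ => (ρ ^ (p - β + 1 - 1) * exp (-(r * ρ)) +
    a * (ρ ^ (p - β + 1 + α - 1) * exp (-(r * ρ)))) / b
  have h₁ := integrableOn_rpow_sub_one_mul_exp_neg_mul hs₁ hr
  have h₂ := integrableOn_rpow_sub_one_mul_exp_neg_mul hs₂ hr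
  have hg₀ : IntegrableOn g (Ioi 0) := (h₁.add (h₂.const_mul a)).div_const b
  have hg : IntegrableOn g (Ioi u) := hg₀.mono_set (Ioi_subset_Ioi hu)
  have hle : ∀ ρ ∈ Ioi u,
      ρ ^ (p - 1) * (ρ + a * ρ ^ (1 + α)) * min 1 (ρ ^ (-β) / b) * exp (t * ρ * κ) ≤ g ρ := by
    intro ρ (hρ : u < ρ)
    dsimp only [g]
    rw [show t * ρ * κ = -(r * ρ) by ring, show p - β + 1 + α - 1 = p - β + α by ring,
      add_sub_cancel_right]
    calc _ ≤ (ρ ^ (p - β) + a * ρ ^ (p - β + α)) / b * exp (-(r * ρ)) := by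
          gcongr; exact rpow_sub_one_mul_add_mul_min_le (by linarith) ha
      _ = _ := by ring
  calc _ ≤ ∫ ρ in Ioi u, g ρ := by
        refine integral_mono_of_nonneg ?_ hg ?_
        · filter_upwards [self_mem_ae_restrict measurableSet_Ioi] with ρ (hρ : u < ρ)
          have : 0 < ρ := by linarith
          positivity
        · exact (ae_restrict_iff' measurableSet_Ioi).2 (.of_forall hle)
    _ = ((∫ ρ in Ioi u, ρ ^ (p - β + 1 - 1) * exp (-(r * ρ))) +
          a * ∫ ρ in Ioi u, ρ ^ (p - β + 1 + α - 1) * exp (-(r * ρ))) / b := by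
        dsimp only [g]
        rw [MeasureTheory.integral_div, MeasureTheory.integral_add (h₁.mono_set (Ioi_subset_Ioi hu))
          ((h₂.mono_set (Ioi_subset_Ioi hu)).const_mul a), MeasureTheory.integral_const_mul]
    _ ≤ (Gamma (p - β + 1) * r ^ (-(p - β + 1)) +
          a * (Gamma (p - β + 1 + α) * r ^ (-(p - β + 1 + α)))) / b := by
        gcongr
        exacts [setIntegral_Ioi_rpow_sub_one_mul_exp_neg_mul_le hs₁ hr hu,
          setIntegral_Ioi_rpow_sub_one_mul_exp_neg_mul_le hs₂ hr hu]
    _ = _ := by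
        rw [mul_rpow (neg_pos.2 hκ).le ht.le, mul_rpow (neg_pos.2 hκ).le ht.le]
        ring

theorem contour_integral_bound_nu_one (α β a b T θ : ℝ)
    (hα : α ∈ Set.Ioo (0 : ℝ) 1) (hβ : β ∈ Set.Ioo (0 : ℝ) 1)
    (ha : 0 < a) (hb : 0 < b) (hT : 0 < T)
    (hθ : Real.pi / 2 < θ) (hθπ : θ < Real.pi) (m : ℕ) :
    ∃ C > 0, ∀ t ∈ Set.Ioc (0 : ℝ) T,
      2 * (∫ ρ in Set.Ioi (1 / t),
            ρ ^ ((m : ℝ) - 1) * (ρ + a * ρ ^ (1 + α)) * min 1 (ρ ^ (-β) / b) *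
              Real.exp (t * ρ * Real.cos θ)) +
          t ^ (-(m : ℝ)) * (1 / t + a * (1 / t) ^ (1 + α)) * min 1 (t ^ β / b) *
            ∫ ψ in (-θ)..θ, Real.exp (Real.cos ψ) ≤
        C * t ^ (-(m : ℝ) - 1 - α + β) := by
  obtain ⟨hα₀, -⟩ := hα
  obtain ⟨-, hβ₁⟩ := hβ
  have hcos : cos θ < 0 := cos_neg_of_pi_div_two_lt_of_lt hθ (by linarith [pi_pos])
  set K := ∫ ψ in (-θ)..θ, exp (cos ψ)
  have hK : 0 ≤ K := integral_nonneg (by linarith [pi_pos]) fun ψ _ => (exp_pos _).le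
  set s : ℝ := m - β + 1
  have hmβ : β < m + 1 := by linarith [(Nat.cast_nonneg m : (0 : ℝ) ≤ m)]
  have hs : 0 < s := by linarith
  set G : ℝ → ℝ := fun σ => Gamma σ * (-cos θ) ^ (-σ)
  set M := max (G s) (G (s + α))
  have hM : 0 < M :=
    lt_max_of_lt_left (mul_pos (Gamma_pos_of_pos hs) (rpow_pos_of_pos (neg_pos.2 hcos) _))
  refine ⟨(2 * M + K) / b * (T ^ α + a), by positivity, fun t ⟨ht, htT⟩ => ?_⟩
  set I := ∫ ρ in Ioi (1 / t),
    ρ ^ ((m : ℝ) - 1) * (ρ + a * ρ ^ (1 + α)) * min 1 (ρ ^ (-β) / b) * exp (t * ρ * cos θ)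
  set X := t ^ (-s) + a * t ^ (-(s + α))
  have hray : I ≤ M / b * X := by
    refine (setIntegral_Ioi_rpow_mul_add_mul_min_mul_exp_le hmβ hα₀.le ha.le hb hcos ht
      (one_div_pos.2 ht).le).trans ?_
    calc _ ≤ (M * t ^ (-s) + a * (M * t ^ (-(s + α)))) / b := by
          gcongr
          exacts [le_max_left _ _, le_max_right _ _]
      _ = M / b * X := by ring
  have harc : t ^ (-(m : ℝ)) * (1 / t + a * (1 / t) ^ (1 + α)) * min 1 (t ^ β / b) ≤ X / b :=
    rpow_neg_mul_add_mul_min_le ht ha.le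
  have hX : X ≤ (T ^ α + a) * t ^ (-(s + α)) := by
    linarith [rpow_neg_le_mul_rpow_neg (s := s) ht htT hα₀.le]
  rw [show -(m : ℝ) - 1 - α + β = -(s + α) by ring]
  calc 2 * I + t ^ (-(m : ℝ)) * (1 / t + a * (1 / t) ^ (1 + α)) * min 1 (t ^ β / b) * K
      ≤ 2 * (M / b * X) + X / b * K := by gcongr
    _ = (2 * M + K) / b * X := by ring
    _ ≤ (2 * M + K) / b * ((T ^ α + a) * t ^ (-(s + α))) := by gcongr
    _ = _ := by ring
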